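/- Let n be an integer and let g_k(n) be the polynomials defined by the recursion g_0(n) = 1 and g_{k+1}(n)(u) = −((n − k)·u·g_k(n)(u) + (u² − 1)·d/du[g_k(n)(u)]). Then for every natural number k and every complex number x with cos x ≠ 0, the k-th derivative of the function z ↦ (cos z)^n (integer power), evaluated at x, equals (cos x)^(n−k) · g_k(n)(sin x). -/

import Mathlib

/-! Differentiating `cos z ^ m * p (sin z)` gives `cos z ^ (m - 1) * q (sin z)` with
`q = -(m X p + (X² - 1) p')`, because `cos² = -(sin² - 1)`; this is exactly the recursion
defining `gPoly n`, with `m = n - k` at step `k`. -/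

open Polynomial

/-- The polynomials `g_k(n)` with `g_0(n) = 1` and
`g_{k+1}(n)(u) = -((n - k)·u·g_k(n)(u) + (u² - 1)·d/du[g_k(n)(u)])`. -/
noncomputable def gPoly (n : ℤ) : ℕ → Polynomial ℂ
  | 0 => 1
  | k + 1 =>
      -(Polynomial.C ((n : ℂ) - (k : ℂ)) * Polynomial.X * gPoly n k +
        (Polynomial.X ^ 2 - 1) * Polynomial.derivative (gPoly n k))

theorem Complex.hasDerivAt_cos_zpow_mul_eval_sin (m : ℤ) (p : ℂ[X]) {x : ℂ}
    (hx : Complex.cos x ≠ 0) :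
    HasDerivAt (fun z => Complex.cos z ^ m * p.eval (Complex.sin z))
      (Complex.cos x ^ (m - 1) *
        (-(C (m : ℂ) * X * p + (X ^ 2 - 1) * derivative p)).eval (Complex.sin x)) x := by
  have hpow := (hasDerivAt_zpow m (Complex.cos x) (Or.inl hx)).comp x (Complex.hasDerivAt_cos x)
  have hpoly := (p.hasDerivAt (Complex.sin x)).comp x (Complex.hasDerivAt_sin x)
  refine (hpow.fun_mul hpoly).congr_deriv ?_
  have hcos : Complex.cos x ^ m = Complex.cos x ^ (m - 1) * Complex.cos x := by
    rw [zpow_sub_one₀ hx, inv_mul_cancel_right₀ hx]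
  have hsin : Complex.sin x ^ 2 - 1 = -Complex.cos x ^ 2 := by
    linear_combination Complex.sin_sq_add_cos_sq x
  simp only [eval_neg, eval_add, eval_mul, eval_C, eval_X, eval_sub, eval_pow, eval_one,
    Function.comp_apply, hsin]
  rw [hcos]
  ring

theorem gPoly_succ (n : ℤ) (k : ℕ) :
    gPoly n (k + 1) = -(C ((n - k : ℤ) : ℂ) * X * gPoly n k +
      (X ^ 2 - 1) * derivative (gPoly n k)) := by
  rw [gPoly, Int.cast_sub, Int.cast_natCast]

theorem iteratedDeriv_cos_zpow_eq_gPoly (n : ℤ) (k : ℕ) (x : ℂ)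
    (hx : Complex.cos x ≠ 0) :
    iteratedDeriv k (fun z : ℂ => Complex.cos z ^ n) x =
      Complex.cos x ^ (n - (k : ℤ)) * (gPoly n k).eval (Complex.sin x) := by
  induction k generalizing x with
  | zero => simp [gPoly]
  | succ k ih =>
    have hnear : iteratedDeriv k (fun z : ℂ => Complex.cos z ^ n) =ᶠ[nhds x]
        fun z => Complex.cos z ^ (n - k) * (gPoly n k).eval (Complex.sin z) :=
      (Complex.continuous_cos.continuousAt.eventually_ne hx).mono ih
    rw [iteratedDeriv_succ, hnear.deriv_eq,
      (Complex.hasDerivAt_cos_zpow_mul_eval_sin _ _ hx).deriv, gPoly_succ]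
    congr 2
    push_cast
    ring
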